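/- (Simplified entropy bounds for a uniform, zero-mean Gaussian mixture.) Suppose f_A(a) = (1/L) Σ_{l=1}^L f_l(a) where each f_l is the density of CN(0, σ_l²). Then the entropy h(A) satisfies h(A) ≥ log₂(π L) − (1/L) Σ_{l=1}^L log₂( Σ_{t=1}^L 1/(σ_l² + σ_t²) ) and h(A) ≤ log₂(π e L) + (1/L) Σ_{l=1}^L log₂(σ_l²). -/

import Mathlib

/-!
Write `m = (1/L) ∑ₗ fₗ`, so that `∫ m log m = (1/L) ∑ₗ ∫ fₗ log m`. Jensen's inequality for the
concave `log` against the density `fₗ` gives `∫ fₗ log m ≤ log ∫ fₗ m = log ((1/L) ∑ₜ ∫ fₗ fₜ)`,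
and a product of two centred Gaussian densities integrates to `1 / (π (σₗ² + σₜ²))`: this is the
lower bound on the entropy. Conversely `m ≥ fₗ / L`, so `∫ fₗ log m ≥ -h(fₗ) - log L` with
`h(fₗ) = log (π e σₗ²)`: this is the upper bound. The sandwich `fₗ / L ≤ m ≤ const` also makes
`fₗ log m` integrable.
-/

open MeasureTheory Real Set

lemma integral_exp_neg_mul_sq_norm_complex {b : ℝ} (hb : 0 < b) :
    ∫ a : ℂ, exp (-b * ‖a‖ ^ 2) = π / b := by
  rw [GaussianFourier.integral_rexp_neg_mul_sq_norm hb, Complex.finrank_real_complex]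
  norm_num

lemma integral_sq_norm_mul_exp_neg_mul_sq_norm_complex {b : ℝ} (hb : 0 < b) :
    ∫ a : ℂ, ‖a‖ ^ 2 * exp (-b * ‖a‖ ^ 2) = π / b ^ 2 := by
  -- in polar coordinates this is `2π ∫₀^∞ y³ e^(-b y²) dy`, a Gamma integral
  have hradial := integral_fun_norm_addHaar (volume : Measure ℂ)
    (fun y : ℝ => y ^ 2 * exp (-b * y ^ 2))
  have hIoi : ∫ y in Ioi (0 : ℝ), y ^ (Module.finrank ℝ ℂ - 1) • (y ^ 2 * exp (-b * y ^ 2))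
      = ∫ y in Ioi (0 : ℝ), y ^ (3 : ℝ) * exp (-b * y ^ (2 : ℝ)) := by
    refine setIntegral_congr_fun measurableSet_Ioi fun y _ => ?_
    simp only [Complex.finrank_real_complex, smul_eq_mul]
    norm_cast
    ring
  rw [hradial, hIoi, integral_rpow_mul_exp_neg_mul_rpow two_pos (by norm_num) hb]
  have hexp : -((3 : ℝ) + 1) / 2 = -(2 : ℕ) := by norm_num
  have hGamma : ((3 : ℝ) + 1) / 2 = 2 := by norm_num
  simp only [Complex.finrank_real_complex, Complex.volume_ball, Measure.real, nsmul_eq_mul,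
    smul_eq_mul, ENNReal.ofReal_one, one_pow, one_mul, ENNReal.coe_toReal, NNReal.coe_real_pi,
    Nat.cast_ofNat]
  rw [hexp, hGamma, rpow_neg hb.le, rpow_natCast, Real.Gamma_two]
  field_simp

-- the density of CN(0, v): `v` is the variance, the paper's `σ²`
noncomputable def complexGaussianPDF (v : ℝ) (a : ℂ) : ℝ := (π * v)⁻¹ * exp (-‖a‖ ^ 2 / v)

section ComplexGaussian

variable {v w : ℝ}

lemma complexGaussianPDF_eq (v : ℝ) (a : ℂ) :
    complexGaussianPDF v a = (π * v)⁻¹ * exp (-v⁻¹ * ‖a‖ ^ 2) := by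
  rw [complexGaussianPDF, neg_div, div_eq_inv_mul, neg_mul]

lemma complexGaussianPDF_pos (hv : 0 < v) (a : ℂ) : 0 < complexGaussianPDF v a := by
  unfold complexGaussianPDF
  positivity

lemma complexGaussianPDF_le (hv : 0 < v) (a : ℂ) : complexGaussianPDF v a ≤ (π * v)⁻¹ := by
  refine mul_le_of_le_one_right (by positivity) (exp_le_one_iff.2 ?_)
  exact div_nonpos_of_nonpos_of_nonneg (neg_nonpos.2 (by positivity)) hv.le

lemma integral_complexGaussianPDF (hv : 0 < v) : ∫ a, complexGaussianPDF v a = 1 := by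
  simp_rw [complexGaussianPDF_eq, integral_const_mul,
    integral_exp_neg_mul_sq_norm_complex (inv_pos.2 hv)]
  field_simp [pi_pos.ne']

lemma integrable_complexGaussianPDF (hv : 0 < v) : Integrable (complexGaussianPDF v) :=
  .of_integral_ne_zero (by simp [integral_complexGaussianPDF hv])

lemma integral_norm_sq_mul_complexGaussianPDF (hv : 0 < v) :
    ∫ a, ‖a‖ ^ 2 * complexGaussianPDF v a = v := by
  simp_rw [complexGaussianPDF_eq, mul_left_comm _ (π * v)⁻¹, integral_const_mul,
    integral_sq_norm_mul_exp_neg_mul_sq_norm_complex (inv_pos.2 hv)]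
  field_simp [pi_pos.ne']

lemma integrable_norm_sq_mul_complexGaussianPDF (hv : 0 < v) :
    Integrable fun a => ‖a‖ ^ 2 * complexGaussianPDF v a :=
  .of_integral_ne_zero (by simp [integral_norm_sq_mul_complexGaussianPDF hv, hv.ne'])

lemma log_complexGaussianPDF (hv : 0 < v) (a : ℂ) :
    log (complexGaussianPDF v a) = -log (π * v) - ‖a‖ ^ 2 / v := by
  rw [complexGaussianPDF, log_mul (by positivity) (exp_pos _).ne', log_inv,
    log_exp, neg_div, sub_eq_add_neg]

lemma complexGaussianPDF_mul_log (hv : 0 < v) (a : ℂ) :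
    complexGaussianPDF v a * log (complexGaussianPDF v a)
      = -log (π * v) * complexGaussianPDF v a - v⁻¹ * (‖a‖ ^ 2 * complexGaussianPDF v a) := by
  rw [log_complexGaussianPDF hv]
  ring

lemma integrable_complexGaussianPDF_mul_log (hv : 0 < v) :
    Integrable fun a => complexGaussianPDF v a * log (complexGaussianPDF v a) := by
  simp_rw [complexGaussianPDF_mul_log hv]
  exact ((integrable_complexGaussianPDF hv).const_mul _).sub
    ((integrable_norm_sq_mul_complexGaussianPDF hv).const_mul _)

lemma integral_complexGaussianPDF_mul_log (hv : 0 < v) :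
    ∫ a, complexGaussianPDF v a * log (complexGaussianPDF v a) = -log (π * exp 1 * v) := by
  simp_rw [complexGaussianPDF_mul_log hv]
  rw [integral_sub ((integrable_complexGaussianPDF hv).const_mul _)
      ((integrable_norm_sq_mul_complexGaussianPDF hv).const_mul _),
    integral_const_mul, integral_const_mul, integral_complexGaussianPDF hv,
    integral_norm_sq_mul_complexGaussianPDF hv, inv_mul_cancel₀ hv.ne',
    log_mul pi_pos.ne' hv.ne', log_mul (by positivity) hv.ne', log_mul pi_pos.ne' (exp_pos 1).ne',
    log_exp]
  ring

lemma complexGaussianPDF_mul (hv : 0 < v) (hw : 0 < w) (a : ℂ) :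
    complexGaussianPDF v a * complexGaussianPDF w a
      = (π * (v + w))⁻¹ * complexGaussianPDF (v * w / (v + w)) a := by
  simp only [complexGaussianPDF]
  rw [mul_mul_mul_comm, ← exp_add, ← mul_assoc]
  congr 1
  · field_simp
  · congr 1
    field_simp
    ring

lemma integral_complexGaussianPDF_mul (hv : 0 < v) (hw : 0 < w) :
    ∫ a, complexGaussianPDF v a * complexGaussianPDF w a = (π * (v + w))⁻¹ := by
  simp_rw [complexGaussianPDF_mul hv hw]
  rw [integral_const_mul, integral_complexGaussianPDF (by positivity), mul_one]

lemma integrable_complexGaussianPDF_mul (hv : 0 < v) (hw : 0 < w) :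
    Integrable fun a => complexGaussianPDF v a * complexGaussianPDF w a := by
  simp_rw [complexGaussianPDF_mul hv hw]
  exact (integrable_complexGaussianPDF (by positivity)).const_mul _

end ComplexGaussian

section UniformMixture

variable {α ι : Type*} [Fintype ι] {p : ι → α → ℝ}

noncomputable def uniformMixture (p : ι → α → ℝ) (a : α) : ℝ :=
  (1 / (Fintype.card ι : ℝ)) * ∑ i, p i a

lemma mul_le_uniformMixture (hp : ∀ i a, 0 ≤ p i a) (i : ι) (a : α) :
    (1 / (Fintype.card ι : ℝ)) * p i a ≤ uniformMixture p a :=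
  mul_le_mul_of_nonneg_left (Finset.single_le_sum (fun j _ => hp j a) (Finset.mem_univ i))
    (by positivity)

lemma uniformMixture_pos [Nonempty ι] (hp : ∀ i a, 0 < p i a) (a : α) :
    0 < uniformMixture p a :=
  mul_pos (by positivity) (Finset.sum_pos (fun i _ => hp i a) Finset.univ_nonempty)

end UniformMixture

section LogIntegrals

variable {α : Type*} [MeasurableSpace α] {μ : Measure α}

lemma integral_mul_pos_of_integral_pos {p q : α → ℝ} (hp : 0 ≤ p) (hq : ∀ a, 0 < q a)
    (hp_int : Integrable p μ) (hpq_int : Integrable (fun a => p a * q a) μ)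
    (hp_pos : 0 < ∫ a, p a ∂μ) : 0 < ∫ a, p a * q a ∂μ := by
  have hsupp : Function.support (fun a => p a * q a) = Function.support p := by
    ext a
    simp [(hq a).ne']
  rw [integral_pos_iff_support_of_nonneg (fun a => mul_nonneg (hp a) (hq a).le) hpq_int, hsupp]
  exact (integral_pos_iff_support_of_nonneg hp hp_int).mp hp_pos

lemma integral_mul_log_le_log_integral_mul {p q : α → ℝ} (hp : 0 ≤ p) (hq : ∀ a, 0 < q a)
    (hp_int : Integrable p μ) (hp_one : ∫ a, p a ∂μ = 1)
    (hpq_int : Integrable (fun a => p a * q a) μ)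
    (hplogq_int : Integrable (fun a => p a * log (q a)) μ) :
    ∫ a, p a * log (q a) ∂μ ≤ log (∫ a, p a * q a ∂μ) := by
  set c := ∫ a, p a * q a ∂μ
  have hc : 0 < c := integral_mul_pos_of_integral_pos hp hq hp_int hpq_int (by simp [hp_one])
  -- the tangent line of `log` at `c`
  have htangent : ∀ a, p a * log (q a) ≤ c⁻¹ * (p a * q a) + (log c - 1) * p a := by
    intro a
    have h := log_le_sub_one_of_pos (div_pos (hq a) hc)
    rw [log_div (hq a).ne' hc.ne'] at h
    have := mul_le_mul_of_nonneg_left h (hp a)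
    rw [div_eq_inv_mul] at this
    linarith
  calc ∫ a, p a * log (q a) ∂μ
      ≤ ∫ a, c⁻¹ * (p a * q a) + (log c - 1) * p a ∂μ :=
        integral_mono hplogq_int ((hpq_int.const_mul _).add (hp_int.const_mul _)) htangent
    _ = log c := by
        rw [integral_add (hpq_int.const_mul _) (hp_int.const_mul _), integral_const_mul,
          integral_const_mul, hp_one, inv_mul_cancel₀ hc.ne']
        ring

lemma integral_mul_log_add_log_le {p q : α → ℝ} {c : ℝ} (hc : 0 < c) (hp : ∀ a, 0 < p a)
    (hpq : ∀ a, c * p a ≤ q a) (hp_int : Integrable p μ) (hp_one : ∫ a, p a ∂μ = 1)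
    (hplogp_int : Integrable (fun a => p a * log (p a)) μ)
    (hplogq_int : Integrable (fun a => p a * log (q a)) μ) :
    ∫ a, p a * log (p a) ∂μ + log c ≤ ∫ a, p a * log (q a) ∂μ := by
  have hpointwise : ∀ a, p a * log (p a) + log c * p a ≤ p a * log (q a) := by
    intro a
    have h : log (c * p a) ≤ log (q a) := log_le_log (mul_pos hc (hp a)) (hpq a)
    rw [log_mul hc.ne' (hp a).ne'] at h
    nlinarith [hp a]
  calc ∫ a, p a * log (p a) ∂μ + log c
      = ∫ a, p a * log (p a) + log c * p a ∂μ := by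
        rw [integral_add hplogp_int (hp_int.const_mul _), integral_const_mul, hp_one, mul_one]
    _ ≤ ∫ a, p a * log (q a) ∂μ :=
        integral_mono (hplogp_int.add (hp_int.const_mul _)) hplogq_int hpointwise

lemma integrable_mul_log_of_mul_le_of_le {p q : α → ℝ} {c K : ℝ} (hc : 0 < c)
    (hp : ∀ a, 0 < p a) (hpq : ∀ a, c * p a ≤ q a) (hqK : ∀ a, q a ≤ K)
    (hp_int : Integrable p μ) (hplogp_int : Integrable (fun a => p a * log (p a)) μ)
    (hq_meas : AEStronglyMeasurable q μ) :
    Integrable (fun a => p a * log (q a)) μ := by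
  have hbound : ∀ a, ‖p a * log (q a)‖ ≤ ‖p a * log (p a) + log c * p a‖ + |log K| * p a := by
    intro a
    have hcp : 0 < c * p a := mul_pos hc (hp a)
    have hlow : log (c * p a) ≤ log (q a) := log_le_log hcp (hpq a)
    have hup : log (q a) ≤ log K := log_le_log (hcp.trans_le (hpq a)) (hqK a)
    rw [log_mul hc.ne' (hp a).ne'] at hlow
    have habs : |log (q a)| ≤ |log c + log (p a)| + |log K| := by
      rw [abs_le]
      constructor <;> linarith [neg_abs_le (log c + log (p a)), le_abs_self (log K),
        abs_nonneg (log c + log (p a)), abs_nonneg (log K)]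
    calc ‖p a * log (q a)‖ = p a * |log (q a)| := by
          rw [Real.norm_eq_abs, abs_mul, abs_of_pos (hp a)]
      _ ≤ p a * (|log c + log (p a)| + |log K|) := by gcongr; exact (hp a).le
      _ = ‖p a * log (p a) + log c * p a‖ + |log K| * p a := by
          rw [Real.norm_eq_abs, show p a * log (p a) + log c * p a = p a * (log c + log (p a))
            by ring, abs_mul, abs_of_pos (hp a)]
          ring
  refine Integrable.mono' ((hplogp_int.add (hp_int.const_mul _)).norm.add
    (hp_int.const_mul _)) (hp_int.aestronglyMeasurable.mul ?_) (ae_of_all _ hbound)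
  exact (measurable_log.comp_aemeasurable hq_meas.aemeasurable).aestronglyMeasurable

end LogIntegrals

section MixtureEntropy

variable {α ι : Type*} [MeasurableSpace α] {μ : Measure α} [Fintype ι] {p : ι → α → ℝ}

lemma aestronglyMeasurable_uniformMixture (hp : ∀ i, AEStronglyMeasurable (p i) μ) :
    AEStronglyMeasurable (uniformMixture p) μ := by
  unfold uniformMixture
  fun_prop

lemma integral_uniformMixture_mul {g : α → ℝ} (hg : ∀ i, Integrable (fun a => p i a * g a) μ) :
    ∫ a, uniformMixture p a * g a ∂μ = (1 / (Fintype.card ι : ℝ)) * ∑ i, ∫ a, p i a * g a ∂μ := by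
  simp only [uniformMixture, mul_assoc, Finset.sum_mul]
  rw [integral_const_mul, integral_finsetSum _ fun i _ => hg i]

lemma integrable_mul_uniformMixture {g : α → ℝ}
    (hg : ∀ i, Integrable (fun a => g a * p i a) μ) :
    Integrable (fun a => g a * uniformMixture p a) μ := by
  have h : (fun a => g a * uniformMixture p a)
      = fun a => (1 / (Fintype.card ι : ℝ)) * ∑ i, g a * p i a :=
    funext fun a => by rw [uniformMixture, mul_left_comm, Finset.mul_sum]
  rw [h]
  exact (integrable_finsetSum _ fun i _ => hg i).const_mul _

theorem uniformMixture_entropy_bounds [Nonempty ι] (hp : ∀ i a, 0 < p i a)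
    (hp_int : ∀ i, Integrable (p i) μ) (hp_one : ∀ i, ∫ a, p i a ∂μ = 1)
    (hpp_int : ∀ i j, Integrable (fun a => p i a * p j a) μ)
    (hplogp_int : ∀ i, Integrable (fun a => p i a * log (p i a)) μ)
    {K : ℝ} (hK : ∀ a, uniformMixture p a ≤ K) :
    -((1 / (Fintype.card ι : ℝ)) * ∑ i, log ((1 / (Fintype.card ι : ℝ)) *
        ∑ j, ∫ a, p i a * p j a ∂μ)) ≤ -∫ a, uniformMixture p a * log (uniformMixture p a) ∂μ ∧
      -∫ a, uniformMixture p a * log (uniformMixture p a) ∂μ ≤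
        (1 / (Fintype.card ι : ℝ)) * ∑ i, (-∫ a, p i a * log (p i a) ∂μ)
          + log (Fintype.card ι) := by
  set n : ℝ := (Fintype.card ι : ℝ) with hn_def
  have hn_pos : 0 < n := by positivity
  have hn_inv : 0 < 1 / n := one_div_pos.2 hn_pos
  have hmix_int : ∀ i, Integrable (fun a => p i a * log (uniformMixture p a)) μ := fun i =>
    integrable_mul_log_of_mul_le_of_le hn_inv (hp i)
      (mul_le_uniformMixture (fun j a => (hp j a).le) i) hK (hp_int i) (hplogp_int i) (aestronglyMeasurable_uniformMixture fun j => (hp_int j).1)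
  rw [integral_uniformMixture_mul hmix_int]
  constructor
  · have hcross : ∀ i, ∫ a, p i a * uniformMixture p a ∂μ = 1 / n * ∑ j, ∫ a, p i a * p j a ∂μ := by
      intro i
      simp_rw [mul_comm (p i _)]
      rw [integral_uniformMixture_mul fun j => by simpa only [mul_comm] using hpp_int i j]
    have hjensen : ∀ i, ∫ a, p i a * log (uniformMixture p a) ∂μ
        ≤ log (1 / n * ∑ j, ∫ a, p i a * p j a ∂μ) := fun i => by
      rw [← hcross i]
      exact integral_mul_log_le_log_integral_mul (fun a => (hp i a).le)
        (uniformMixture_pos hp) (hp_int i) (hp_one i) (integrable_mul_uniformMixture (hpp_int i))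
        (hmix_int i)
    gcongr with i
    exact hjensen i
  · have hcomponent : ∀ i, ∫ a, p i a * log (p i a) ∂μ - log n
        ≤ ∫ a, p i a * log (uniformMixture p a) ∂μ := fun i => by
      simpa [one_div, log_inv, ← sub_eq_add_neg] using integral_mul_log_add_log_le hn_inv (hp i)
        (mul_le_uniformMixture (fun j a => (hp j a).le) i) (hp_int i) (hp_one i)
        (hplogp_int i) (hmix_int i)
    calc -(1 / n * ∑ i, ∫ a, p i a * log (uniformMixture p a) ∂μ)
        ≤ -(1 / n * ∑ i, (∫ a, p i a * log (p i a) ∂μ - log n)) := by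
          gcongr with i
          exact hcomponent i
      _ = 1 / n * ∑ i, (-∫ a, p i a * log (p i a) ∂μ) + log n := by
          simp only [Finset.sum_sub_distrib, Finset.sum_neg_distrib, Finset.sum_const,
            Finset.card_univ, nsmul_eq_mul, ← hn_def]
          field_simp [hn_pos.ne']
          ring

end MixtureEntropy

section LogSums

variable {ι : Type*} [Fintype ι]

lemma mul_sum_logb (c b : ℝ) (x : ι → ℝ) :
    c * ∑ i, logb b (x i) = (c * ∑ i, log (x i)) / log b := by
  simp_rw [logb, ← Finset.sum_div, mul_div_assoc]

lemma one_div_card_mul_sum_log_mul [Nonempty ι] {c : ℝ} (hc : 0 < c) {x : ι → ℝ}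
    (hx : ∀ i, 0 < x i) :
    (1 / (Fintype.card ι : ℝ)) * ∑ i, log (c * x i)
      = log c + (1 / (Fintype.card ι : ℝ)) * ∑ i, log (x i) := by
  simp only [log_mul hc.ne' (hx _).ne', Finset.sum_add_distrib, Finset.sum_const,
    Finset.card_univ, nsmul_eq_mul, mul_add]
  field_simp

end LogSums

lemma neg_integral_mul_logb {α : Type*} [MeasurableSpace α] {μ : Measure α} (f : α → ℝ) (b : ℝ) :
    -∫ a, f a * logb b (f a) ∂μ = (-∫ a, f a * log (f a) ∂μ) / log b := by
  simp_rw [logb, mul_div_assoc', integral_div, neg_div]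

theorem entropy_uniformMixture_complexGaussianPDF_bounds {ι : Type*} [Fintype ι] [Nonempty ι]
    {σ : ι → ℝ} (hσ : ∀ i, 0 < σ i) :
    log (π * Fintype.card ι) - (1 / (Fintype.card ι : ℝ)) * ∑ i, log (∑ j, 1 / (σ i + σ j))
        ≤ -∫ a, uniformMixture (fun i => complexGaussianPDF (σ i)) a
            * log (uniformMixture (fun i => complexGaussianPDF (σ i)) a) ∧
      -∫ a, uniformMixture (fun i => complexGaussianPDF (σ i)) a
            * log (uniformMixture (fun i => complexGaussianPDF (σ i)) a)
        ≤ log (π * exp 1 * Fintype.card ι) + (1 / (Fintype.card ι : ℝ)) * ∑ i, log (σ i) := by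
  have hK : ∀ a, uniformMixture (fun i => complexGaussianPDF (σ i)) a
      ≤ 1 / (Fintype.card ι : ℝ) * ∑ i, (π * σ i)⁻¹ :=
    fun a => mul_le_mul_of_nonneg_left
      (Finset.sum_le_sum fun i _ => complexGaussianPDF_le (hσ i) a) (by positivity)
  obtain ⟨hlow, hup⟩ := uniformMixture_entropy_bounds (μ := volume)
    (fun i => complexGaussianPDF_pos (hσ i)) (fun i => integrable_complexGaussianPDF (hσ i))
    (fun i => integral_complexGaussianPDF (hσ i))
    (fun i j => integrable_complexGaussianPDF_mul (hσ i) (hσ j))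
    (fun i => integrable_complexGaussianPDF_mul_log (hσ i)) hK
  simp only [integral_complexGaussianPDF_mul (hσ _) (hσ _),
    integral_complexGaussianPDF_mul_log (hσ _), neg_neg] at hlow hup
  set n : ℝ := (Fintype.card ι : ℝ)
  have hn : 0 < n := by positivity
  have hcross : ∀ i, 1 / n * ∑ j, (π * (σ i + σ j))⁻¹ = (π * n)⁻¹ * ∑ j, 1 / (σ i + σ j) := by
    intro i
    simp only [Finset.mul_sum]
    refine Finset.sum_congr rfl fun j _ => ?_
    field_simp
  simp only [hcross] at hlow
  constructor
  · convert hlow using 1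
    have hsum_pos : ∀ i, 0 < ∑ j, 1 / (σ i + σ j) := fun i =>
      Finset.sum_pos (fun j _ => one_div_pos.2 (add_pos (hσ i) (hσ j))) Finset.univ_nonempty
    rw [one_div_card_mul_sum_log_mul (by positivity) hsum_pos, log_inv]
    ring
  · convert hup using 1
    rw [one_div_card_mul_sum_log_mul (by positivity) hσ, log_mul (by positivity) hn.ne']
    ring

/-- Simplified entropy bounds for a uniform, zero-mean complex Gaussian mixture. -/
theorem entropy_uniform_gaussian_mixture_bounds
    (L : ℕ) (hL : 0 < L) (σ : Fin L → ℝ) (hσ : ∀ l, 0 < σ l)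
    (f : Fin L → ℂ → ℝ)
    (hf : ∀ l a, f l a = (π * σ l)⁻¹ * Real.exp (-(‖a‖) ^ 2 / σ l))
    (fA : ℂ → ℝ) (hfA : ∀ a, fA a = (1 / L) * ∑ l, f l a) :
    (-∫ a : ℂ, fA a * Real.logb 2 (fA a)) ≥
        Real.logb 2 (π * L) - (1 / L) * ∑ l, Real.logb 2 (∑ t, 1 / (σ l + σ t)) ∧
      (-∫ a : ℂ, fA a * Real.logb 2 (fA a)) ≤
        Real.logb 2 (π * Real.exp 1 * L) + (1 / L) * ∑ l, Real.logb 2 (σ l) := by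
  have : Nonempty (Fin L) := ⟨⟨0, hL⟩⟩
  have hf_eq : f = fun l => complexGaussianPDF (σ l) := funext fun l => funext (hf l)
  subst hf_eq
  have hfA_eq : fA = uniformMixture fun l => complexGaussianPDF (σ l) :=
    funext fun a => by rw [hfA, uniformMixture, Fintype.card_fin]
  subst hfA_eq
  obtain ⟨hlow, hup⟩ := entropy_uniformMixture_complexGaussianPDF_bounds hσ
  rw [Fintype.card_fin] at hlow hup
  have hlog2 : 0 ≤ log 2 := (log_pos one_lt_two).le
  rw [neg_integral_mul_logb, mul_sum_logb, mul_sum_logb, logb, logb]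
  exact ⟨by rw [ge_iff_le, ← sub_div]; gcongr, by rw [← add_div]; gcongr⟩
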